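/- arXiv:2204.00046 — 3 statements merged into one kernel-verified Lean document; each statement's English description precedes it below -/
import Mathlib

section
/- Superposition rule for the Riccati equation: let b₀, b₁, b₂ : ℝ → ℝ, let I ⊆ ℝ be an open interval, and let x₁, x₂, x₃ : I → ℝ be three differentiable solutions of the Riccati equation x' = b₀(t) + b₁(t)x + b₂(t)x². Fix ρ ∈ ℝ and suppose that (x₃(t) − x₁(t)) + ρ(x₁(t) − x₂(t)) ≠ 0 for all t ∈ I. Then the function x(t) = (x₂(t)(x₃(t) − x₁(t)) + ρ x₃(t)(x₁(t) − x₂(t))) / ((x₃(t) − x₁(t)) + ρ(x₁(t) − x₂(t))) is differentiable on I and is also a solution of the Riccati equation x' = b₀(t) + b₁(t)x + b₂(t)x² on I. -/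
/-!
Write `x = N / D` with `N = x₂ (x₃ - x₁) + ρ x₃ (x₁ - x₂)` and `D = (x₃ - x₁) + ρ (x₁ - x₂)`.
By the quotient rule, `x` solves the Riccati equation wherever `D ≠ 0` as soon as
`N' D - N D' = b₀ D² + b₁ N D + b₂ N²`. After substituting `xᵢ' = b₀ + b₁ xᵢ + b₂ xᵢ²`
this is a polynomial identity in `b₀, b₁, b₂, ρ, x₁, x₂, x₃`.
-/

section Algebra

variable {R : Type*} [CommRing R]

def riccatiRHS (c₀ c₁ c₂ y : R) : R := c₀ + c₁ * y + c₂ * y ^ 2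

def superpositionNum (ρ y₁ y₂ y₃ : R) : R := y₂ * (y₃ - y₁) + ρ * y₃ * (y₁ - y₂)

def superpositionDen (ρ y₁ y₂ y₃ : R) : R := (y₃ - y₁) + ρ * (y₁ - y₂)

def superpositionNumDeriv (ρ y₁ y₂ y₃ d₁ d₂ d₃ : R) : R :=
  d₂ * (y₃ - y₁) + y₂ * (d₃ - d₁) + (ρ * d₃ * (y₁ - y₂) + ρ * y₃ * (d₁ - d₂))

theorem superposition_wronskian_riccati (c₀ c₁ c₂ ρ y₁ y₂ y₃ : R) :
    let r := riccatiRHS c₀ c₁ c₂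
    let N := superpositionNum ρ y₁ y₂ y₃
    let D := superpositionDen ρ y₁ y₂ y₃
    superpositionNumDeriv ρ y₁ y₂ y₃ (r y₁) (r y₂) (r y₃) * D
        - N * superpositionDen ρ (r y₁) (r y₂) (r y₃) =
      c₀ * D ^ 2 + c₁ * N * D + c₂ * N ^ 2 := by
  simp only [riccatiRHS, superpositionNum, superpositionDen, superpositionNumDeriv]
  ring

end Algebra

section Calculus

variable {𝕜 : Type*} [NontriviallyNormedField 𝕜]

theorem superposition_quotient_riccati (c₀ c₁ c₂ ρ y₁ y₂ y₃ : 𝕜)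
    (hD : superpositionDen ρ y₁ y₂ y₃ ≠ 0) :
    let r := riccatiRHS c₀ c₁ c₂
    (superpositionNumDeriv ρ y₁ y₂ y₃ (r y₁) (r y₂) (r y₃) * superpositionDen ρ y₁ y₂ y₃
        - superpositionNum ρ y₁ y₂ y₃ * superpositionDen ρ (r y₁) (r y₂) (r y₃)) /
        superpositionDen ρ y₁ y₂ y₃ ^ 2 =
      r (superpositionNum ρ y₁ y₂ y₃ / superpositionDen ρ y₁ y₂ y₃) := by
  dsimp only
  rw [superposition_wronskian_riccati, riccatiRHS]
  field_simp

variable {f₁ f₂ f₃ : 𝕜 → 𝕜} {d₁ d₂ d₃ t : 𝕜}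

theorem HasDerivAt.superpositionNum (ρ : 𝕜) (h₁ : HasDerivAt f₁ d₁ t)
    (h₂ : HasDerivAt f₂ d₂ t) (h₃ : HasDerivAt f₃ d₃ t) :
    HasDerivAt (fun s => _root_.superpositionNum ρ (f₁ s) (f₂ s) (f₃ s))
      (superpositionNumDeriv ρ (f₁ t) (f₂ t) (f₃ t) d₁ d₂ d₃) t :=
  (h₂.mul (h₃.sub h₁)).add ((h₃.const_mul ρ).mul (h₁.sub h₂))

theorem HasDerivAt.superpositionDen (ρ : 𝕜) (h₁ : HasDerivAt f₁ d₁ t)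
    (h₂ : HasDerivAt f₂ d₂ t) (h₃ : HasDerivAt f₃ d₃ t) :
    HasDerivAt (fun s => _root_.superpositionDen ρ (f₁ s) (f₂ s) (f₃ s))
      (_root_.superpositionDen ρ d₁ d₂ d₃) t :=
  (h₃.sub h₁).add ((h₁.sub h₂).const_mul ρ)

theorem HasDerivAt.riccati_superposition {c₀ c₁ c₂ : 𝕜} (ρ : 𝕜)
    (h₁ : HasDerivAt f₁ (riccatiRHS c₀ c₁ c₂ (f₁ t)) t)
    (h₂ : HasDerivAt f₂ (riccatiRHS c₀ c₁ c₂ (f₂ t)) t)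
    (h₃ : HasDerivAt f₃ (riccatiRHS c₀ c₁ c₂ (f₃ t)) t)
    (hD : _root_.superpositionDen ρ (f₁ t) (f₂ t) (f₃ t) ≠ 0) :
    HasDerivAt (fun s => _root_.superpositionNum ρ (f₁ s) (f₂ s) (f₃ s) /
        _root_.superpositionDen ρ (f₁ s) (f₂ s) (f₃ s))
      (riccatiRHS c₀ c₁ c₂ (_root_.superpositionNum ρ (f₁ t) (f₂ t) (f₃ t) /
        _root_.superpositionDen ρ (f₁ t) (f₂ t) (f₃ t))) t :=
  ((h₁.superpositionNum ρ h₂ h₃).div (h₁.superpositionDen ρ h₂ h₃) hD).congr_deriv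
    (superposition_quotient_riccati c₀ c₁ c₂ ρ _ _ _ hD)

end Calculus

/-- Superposition rule for the Riccati equation: given three solutions
`x₁, x₂, x₃` of `x' = b₀(t) + b₁(t) x + b₂(t) x²` on an open interval `(a, b)`, and a
constant `ρ` for which the denominator never vanishes, the superposition
`x = (x₂ (x₃ − x₁) + ρ x₃ (x₁ − x₂)) / ((x₃ − x₁) + ρ (x₁ − x₂))`
is again a (differentiable) solution of the Riccati equation on `(a, b)`. -/
theorem riccati_superposition_rule
    (b₀ b₁ b₂ : ℝ → ℝ) (a b : ℝ)
    (x₁ x₂ x₃ : ℝ → ℝ)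
    (h₁ : ∀ t ∈ Set.Ioo a b, HasDerivAt x₁ (b₀ t + b₁ t * x₁ t + b₂ t * x₁ t ^ 2) t)
    (h₂ : ∀ t ∈ Set.Ioo a b, HasDerivAt x₂ (b₀ t + b₁ t * x₂ t + b₂ t * x₂ t ^ 2) t)
    (h₃ : ∀ t ∈ Set.Ioo a b, HasDerivAt x₃ (b₀ t + b₁ t * x₃ t + b₂ t * x₃ t ^ 2) t)
    (ρ : ℝ)
    (hden : ∀ t ∈ Set.Ioo a b, (x₃ t - x₁ t) + ρ * (x₁ t - x₂ t) ≠ 0)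
    (x : ℝ → ℝ)
    (hx : ∀ t : ℝ, x t = (x₂ t * (x₃ t - x₁ t) + ρ * x₃ t * (x₁ t - x₂ t)) /
      ((x₃ t - x₁ t) + ρ * (x₁ t - x₂ t))) :
    ∀ t ∈ Set.Ioo a b, HasDerivAt x (b₀ t + b₁ t * x t + b₂ t * x t ^ 2) t := by
  intro t ht
  rw [funext hx]
  exact (h₁ t ht).riccati_superposition ρ (h₂ t ht) (h₃ t ht) (hden t ht)
end

section
/- Second-kind canonical coordinates cover the subset of SL(2,ℝ) with positive lower-right entry: if Y = [[α, β], [γ, δ]] ∈ M₂(ℝ) satisfies αδ − βγ = 1 and δ > 0, then setting λ₀ = β/δ, λ₁ = −2·log δ, λ₂ = −γ/δ one has Y = exp(λ₀M₀) · exp(λ₁M₁) · exp(λ₂M₂), where M₀ = [[0,1],[0,0]], M₁ = (1/2)·[[1,0],[0,−1]], M₂ = [[0,0],[−1,0]]. -/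
open NormedSpace

/-- `M₀ = [[0,1],[0,0]]`, first element of the chosen basis of `𝔰𝔩(2,ℝ)`. -/
noncomputable def M₀ : Matrix (Fin 2) (Fin 2) ℝ := !![0, 1; 0, 0]

/-- `M₁ = (1/2)·[[1,0],[0,−1]]`, second element of the chosen basis of `𝔰𝔩(2,ℝ)`. -/
noncomputable def M₁ : Matrix (Fin 2) (Fin 2) ℝ := (1 / 2 : ℝ) • !![1, 0; 0, -1]

/-- `M₂ = [[0,0],[−1,0]]`, third element of the chosen basis of `𝔰𝔩(2,ℝ)`. -/
noncomputable def M₂ : Matrix (Fin 2) (Fin 2) ℝ := !![0, 0; -1, 0]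

lemma exp_of_sq_zero (N : Matrix (Fin 2) (Fin 2) ℝ) (h : N * N = 0) :
    exp N = 1 + N := by
  rw [exp_eq_tsum ℝ]
  have hz : ∀ n ∉ ({0, 1} : Finset ℕ), (((Nat.factorial n : ℝ))⁻¹ • N ^ n) = 0 := by
    intro n hn
    simp only [Finset.mem_insert, Finset.mem_singleton] at hn
    have h2 : 2 ≤ n := by omega
    have : N ^ n = N ^ 2 * N ^ (n - 2) := by
      rw [← pow_add]; congr 1; omega
    rw [this, pow_two, h, Matrix.zero_mul, smul_zero]
  beta_reduce
  rw [tsum_eq_sum hz]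
  simp [Finset.sum_pair (by norm_num : (0:ℕ) ≠ 1)]

/-- Second-kind canonical coordinates cover the subset of `SL(2,ℝ)` with positive
lower-right entry: if `αδ − βγ = 1` and `δ > 0` then, with `λ₀ = β/δ`,
`λ₁ = −2 log δ`, `λ₂ = −γ/δ`, one has
`[[α, β], [γ, δ]] = exp(λ₀M₀) exp(λ₁M₁) exp(λ₂M₂)`. -/
theorem second_kind_canonical_coordinates_cover_SL2 (α β γ δ : ℝ)
    (hdet : α * δ - β * γ = 1) (hδ : 0 < δ) :
    (!![α, β; γ, δ] : Matrix (Fin 2) (Fin 2) ℝ) =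
      exp ((β / δ) • M₀) * exp ((-2 * Real.log δ) • M₁) * exp ((-(γ / δ)) • M₂) := by
  have hδ' : δ ≠ 0 := ne_of_gt hδ
  have h0 : exp ((β / δ) • M₀) = 1 + (β / δ) • M₀ := by
    apply exp_of_sq_zero
    show ((β / δ) • M₀) * ((β / δ) • M₀) = 0
    rw [M₀]
    ext i j
    fin_cases i <;> fin_cases j <;>
      simp [Matrix.mul_apply, Fin.sum_univ_two]
  have h2 : exp ((-(γ / δ)) • M₂) = 1 + (-(γ / δ)) • M₂ := by
    apply exp_of_sq_zero
    rw [M₂]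
    ext i j
    fin_cases i <;> fin_cases j <;>
      simp [Matrix.mul_apply, Fin.sum_univ_two]
  have h1 : exp ((-2 * Real.log δ) • M₁) =
      Matrix.diagonal ![δ⁻¹, δ] := by
    have hdiag : (-2 * Real.log δ) • M₁ =
        Matrix.diagonal ![-Real.log δ, Real.log δ] := by
      rw [M₁]
      ext i j
      fin_cases i <;> fin_cases j <;>
        simp [Matrix.diagonal] <;> ring
    rw [hdiag, Matrix.exp_diagonal, Pi.exp_def]
    ext i j
    fin_cases i <;> fin_cases j <;>
      simp [Matrix.diagonal, ← Real.exp_eq_exp_ℝ, Real.exp_neg, Real.exp_log hδ]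
  rw [h0, h1, h2]
  have hα : α = (1 + β * γ) / δ := by
    field_simp
    linarith
  subst hα
  ext i j
  fin_cases i <;> fin_cases j <;>
    simp [Matrix.mul_apply, Fin.sum_univ_two, M₀, M₂, Matrix.diagonal] <;>
    field_simp
end

section
/- Transfer of solutions from the automorphic Lie system on SL(2,ℝ) to the Riccati equation: let b₀, b₁, b₂ : ℝ → ℝ and set A(t) = b₀(t)M₀ + b₁(t)M₁ + b₂(t)M₂ with M₀ = [[0,1],[0,0]], M₁ = (1/2)·[[1,0],[0,−1]], M₂ = [[0,0],[−1,0]]. Let Y : ℝ → M₂(ℝ) be differentiable with Y'(t) = A(t)Y(t) for all t and Y(0) = I, and write Y(t) = [[α(t), β(t)], [γ(t), δ(t)]]. Fix x₀ ∈ ℝ and let I ⊆ ℝ be an open interval containing 0 on which γ(t)x₀ + δ(t) ≠ 0. Then x(t) = (α(t)x₀ + β(t))/(γ(t)x₀ + δ(t)) satisfies x(0) = x₀ and x'(t) = b₀(t) + b₁(t)x(t) + b₂(t)x(t)² for all t ∈ I. -/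
/-!
The curve `v(t) = Y(t) (x₀, 1)ᵀ` solves the planar linear system `v' = A v`, and the ratio
`v₀ / v₁` of the coordinates of any such solution solves the Riccati equation
`x' = A₀₁ + (A₀₀ - A₁₁) x - A₁₀ x²` wherever `v₁ ≠ 0` (the quotient rule). For
`A = b₀M₀ + b₁M₁ + b₂M₂ = [[b₁/2, b₀], [-b₂, -b₁/2]]` these coefficients are `b₀, b₁, b₂`;
`x(0) = x₀` because `Y(0) = I`.
-/

attribute [local instance] Matrix.normedAddCommGroup Matrix.normedSpace

open Matrix

section Calculus

variable {𝕜 : Type*} [NontriviallyNormedField 𝕜]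

theorem HasDerivAt.matrix_apply {m n : Type*} [Fintype m] [Fintype n]
    {Y : 𝕜 → Matrix m n 𝕜} {Y' : Matrix m n 𝕜} {t : 𝕜} (hY : HasDerivAt Y Y' t) (i : m) (j : n) :
    HasDerivAt (fun s => Y s i j) (Y' i j) t :=
  hasDerivAt_pi.1 (hasDerivAt_pi.1 hY i) j

theorem HasDerivAt.matrix_mulVec {m n : Type*} [Fintype m] [Fintype n]
    {Y : 𝕜 → Matrix m n 𝕜} {Y' : Matrix m n 𝕜} {t : 𝕜} (hY : HasDerivAt Y Y' t) (w : n → 𝕜) :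
    HasDerivAt (fun s => Y s *ᵥ w) (Y' *ᵥ w) t :=
  hasDerivAt_pi.2 fun i => by
    simpa only [mulVec, dotProduct] using
      HasDerivAt.fun_sum (u := Finset.univ) fun j _ => (hY.matrix_apply i j).mul_const (w j)

theorem HasDerivAt.div_of_hasDerivAt_mulVec {v : 𝕜 → Fin 2 → 𝕜} {A : Matrix (Fin 2) (Fin 2) 𝕜}
    {t : 𝕜} (hv : HasDerivAt v (A *ᵥ v t) t) (hvt : v t 1 ≠ 0) :
    HasDerivAt (fun s => v s 0 / v s 1)
      (A 0 1 + (A 0 0 - A 1 1) * (v t 0 / v t 1) - A 1 0 * (v t 0 / v t 1) ^ 2) t := by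
  refine ((hasDerivAt_pi.1 hv 0).div (hasDerivAt_pi.1 hv 1) hvt).congr_deriv ?_
  simp only [mulVec, dotProduct, Fin.sum_univ_two]
  field_simp
  ring

end Calculus

theorem smul_M₀_add_smul_M₁_add_smul_M₂ (c₀ c₁ c₂ : ℝ) :
    c₀ • M₀ + c₁ • M₁ + c₂ • M₂ = !![c₁ / 2, c₀; -c₂, -(c₁ / 2)] := by
  ext i j
  fin_cases i <;> fin_cases j <;> simp [M₀, M₁, M₂] <;> ring

theorem automorphic_system_transfers_to_riccati_general
    (b₀ b₁ b₂ : ℝ → ℝ)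
    (Y : ℝ → Matrix (Fin 2) (Fin 2) ℝ)
    (hY : ∀ t : ℝ, HasDerivAt Y ((b₀ t • M₀ + b₁ t • M₁ + b₂ t • M₂) * Y t) t)
    (hY0 : Y 0 = 1)
    (x₀ a b : ℝ)
    (hden : ∀ t ∈ Set.Ioo a b, Y t 1 0 * x₀ + Y t 1 1 ≠ 0) :
    (Y 0 0 0 * x₀ + Y 0 0 1) / (Y 0 1 0 * x₀ + Y 0 1 1) = x₀ ∧
      ∀ t ∈ Set.Ioo a b,
        HasDerivAt (fun s => (Y s 0 0 * x₀ + Y s 0 1) / (Y s 1 0 * x₀ + Y s 1 1))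
          (b₀ t + b₁ t * ((Y t 0 0 * x₀ + Y t 0 1) / (Y t 1 0 * x₀ + Y t 1 1)) +
            b₂ t * ((Y t 0 0 * x₀ + Y t 0 1) / (Y t 1 0 * x₀ + Y t 1 1)) ^ 2) t := by
  refine ⟨by simp [hY0], fun t ht => ?_⟩
  have hv := (hY t).matrix_mulVec ![x₀, 1]
  rw [← mulVec_mulVec, smul_M₀_add_smul_M₁_add_smul_M₂] at hv
  have hcoord (s : ℝ) (i : Fin 2) : (Y s *ᵥ ![x₀, 1]) i = Y s i 0 * x₀ + Y s i 1 := by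
    simp [mulVec, dotProduct, Fin.sum_univ_two]
  simp only [← hcoord] at hden ⊢
  refine (hv.div_of_hasDerivAt_mulVec (hden t ht)).congr_deriv ?_
  simp only [of_apply, cons_val', cons_val_zero, cons_val_one, empty_val', cons_val_fin_one]
  ring

/-- Transfer of solutions of the automorphic Lie system on `SL(2,ℝ)` to the Riccati
equation: if `Y' = (b₀(t)M₀ + b₁(t)M₁ + b₂(t)M₂) Y`, `Y(0) = I`, and the denominator
`γ(t)x₀ + δ(t)` does not vanish on an open interval `(a, b)` containing `0`, then
`x(t) = (α(t)x₀ + β(t))/(γ(t)x₀ + δ(t))` satisfies `x(0) = x₀` and the Riccati equation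
`x' = b₀(t) + b₁(t)x + b₂(t)x²` on `(a, b)`. -/
theorem automorphic_system_transfers_to_riccati
    (b₀ b₁ b₂ : ℝ → ℝ)
    (Y : ℝ → Matrix (Fin 2) (Fin 2) ℝ)
    (hY : ∀ t : ℝ, HasDerivAt Y ((b₀ t • M₀ + b₁ t • M₁ + b₂ t • M₂) * Y t) t)
    (hY0 : Y 0 = 1)
    (x₀ a b : ℝ) (h0 : (0 : ℝ) ∈ Set.Ioo a b)
    (hden : ∀ t ∈ Set.Ioo a b, Y t 1 0 * x₀ + Y t 1 1 ≠ 0) :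
    (Y 0 0 0 * x₀ + Y 0 0 1) / (Y 0 1 0 * x₀ + Y 0 1 1) = x₀ ∧
      ∀ t ∈ Set.Ioo a b,
        HasDerivAt (fun s => (Y s 0 0 * x₀ + Y s 0 1) / (Y s 1 0 * x₀ + Y s 1 1))
          (b₀ t + b₁ t * ((Y t 0 0 * x₀ + Y t 0 1) / (Y t 1 0 * x₀ + Y t 1 1)) +
            b₂ t * ((Y t 0 0 * x₀ + Y t 0 1) / (Y t 1 0 * x₀ + Y t 1 1)) ^ 2) t :=
  automorphic_system_transfers_to_riccati_general b₀ b₁ b₂ Y hY hY0 x₀ a b hden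
end
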